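/- Under perfect separation (Assumption S) with balanced clusters of size n = N/K and the convention 1 ∈ J₁, any optimal solution (x¹, M¹, x, M) of the balanced LP relaxation R_LP^b with symmetry-breaking constraint x¹₁ = 1 satisfies x¹ᵢ = 1 for all i ∈ J₁ and x¹ᵢ = −1 for all i ∉ J₁; in particular the first cluster J₁ is exactly recovered by selecting the n largest entries of x¹. -/

import Mathlib

/-- The feasible set `C_LP(n)` (i.e. `C_SDP(n)` without the semidefinite
constraint `M ⪰ xxᵀ`). -/
def CLP (N n : ℕ) (x : Fin N → ℝ) (M : Matrix (Fin N) (Fin N) ℝ) : Prop :=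
  M.IsSymm ∧
  (∑ i, x i = 2 * (n : ℝ) - N) ∧
  (M.mulVec (fun _ => 1) = (2 * (n : ℝ) - N) • x) ∧
  (∀ i, M i i = 1) ∧
  (∀ i j, 0 ≤ M i j + 1 + x i + x j) ∧
  (∀ i j, 0 ≤ M i j + 1 - x i - x j) ∧
  (∀ i j, M i j - 1 + x i - x j ≤ 0) ∧
  (∀ i j, M i j - 1 - x i + x j ≤ 0)

/-- A balanced partition of `{1,…,N}` into `K` clusters of size `n`. -/
def BalancedPartition {N K : ℕ} (n : ℕ) (I : Fin K → Finset (Fin N)) : Prop :=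
  (∀ k, (I k).card = n) ∧ (∀ k ℓ, k ≠ ℓ → Disjoint (I k) (I ℓ)) ∧
    (∀ i : Fin N, ∃ k, i ∈ I k)

/-- The objective of the balanced LP relaxation `R_LP^b`. -/
noncomputable def objRLPb {N : ℕ} (K n : ℕ) (D : Fin N → Fin N → ℝ)
    (x1 : Fin N → ℝ) (M1 : Matrix (Fin N) (Fin N) ℝ)
    (x : Fin N → ℝ) (M : Matrix (Fin N) (Fin N) ℝ) : ℝ :=
  (1 / (8 * n)) * ∑ i, ∑ j, D i j *
    ((M1 i j + 1 + x1 i + x1 j) + ((K : ℝ) - 1) * (M i j + 1 + x i + x j))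

/-- Feasibility in `R_LP^b` with symmetry-breaking constraint `x¹_{i₀} = 1`. -/
def FeasRLPb {N : ℕ} (K n : ℕ) (i0 : Fin N)
    (x1 : Fin N → ℝ) (M1 : Matrix (Fin N) (Fin N) ℝ)
    (x : Fin N → ℝ) (M : Matrix (Fin N) (Fin N) ℝ) : Prop :=
  CLP N n x1 M1 ∧ CLP N n x M ∧
    (∀ i, x1 i + ((K : ℝ) - 1) * x i = 2 - K) ∧ x1 i0 = 1

/-!
The objective is `∑ D_ij S_ij` with `S = H + (K - 1) W`. Feasibility forces `0 ≤ S ≤ 4` and row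
sums `4n`, and the feasible point coming from the true clustering has `S*` equal to `4` on pairs
in a common cluster and `0` elsewhere. For a threshold `c` strictly between the within-cluster and
the between-cluster distances, each term of `∑ (D_ij - c)(S_ij - S*_ij)` is nonnegative, while the
sum is `obj S - obj S* ≤ 0` by optimality; hence `S = S*`. Row `i0` of any feasible `S` equals
`2 + 2 x¹`, so `x¹` is the sign vector of `J₁`.
-/

open Finset Matrix

/-- The paper's `W = M + 11ᵀ + x1ᵀ + 1xᵀ` (and `H` for the first block), entrywise. -/
def pairWeight {ι : Type*} (x : ι → ℝ) (M : Matrix ι ι ℝ) (i j : ι) : ℝ :=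
  M i j + 1 + x i + x j

namespace CLP

variable {N n : ℕ} {x : Fin N → ℝ} {M : Matrix (Fin N) (Fin N) ℝ}

lemma pairWeight_nonneg (h : CLP N n x M) (i j : Fin N) : 0 ≤ pairWeight x M i j :=
  h.2.2.2.2.1 i j

lemma two_mul_add_le_pairWeight (h : CLP N n x M) (i j : Fin N) :
    2 * (x i + x j) ≤ pairWeight x M i j := by
  have := h.2.2.2.2.2.1 i j
  unfold pairWeight; linarith

lemma pairWeight_le_left (h : CLP N n x M) (i j : Fin N) :
    pairWeight x M i j ≤ 2 + 2 * x i := by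
  have := h.2.2.2.2.2.2.2 i j
  unfold pairWeight; linarith

lemma pairWeight_le_right (h : CLP N n x M) (i j : Fin N) :
    pairWeight x M i j ≤ 2 + 2 * x j := by
  have := h.2.2.2.2.2.2.1 i j
  unfold pairWeight; linarith

lemma sum_pairWeight (h : CLP N n x M) (i : Fin N) :
    ∑ j, pairWeight x M i j = 2 * n * (1 + x i) := by
  have hrow : ∑ j, M i j = (2 * n - N) * x i := by
    simpa [mulVec, dotProduct] using congrFun h.2.2.1 i
  simp only [pairWeight, sum_add_distrib, hrow, h.2.1, sum_const, card_univ,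
    Fintype.card_fin, nsmul_eq_mul]
  ring

lemma smul_add_smul {y : Fin N → ℝ} {P : Matrix (Fin N) (Fin N) ℝ} (hx : CLP N n x M)
    (hy : CLP N n y P) {a b : ℝ} (ha : 0 ≤ a) (hb : 0 ≤ b) (hab : a + b = 1) :
    CLP N n (a • x + b • y) (a • M + b • P) := by
  obtain ⟨hsymm, hsum, hrow, hdiag, h₁, h₂, h₃, h₄⟩ := hx
  obtain ⟨hsymm', hsum', hrow', hdiag', h₁', h₂', h₃', h₄'⟩ := hy
  refine ⟨(hsymm.smul a).add (hsymm'.smul b), ?_, ?_, fun i => ?_, fun i j => ?_, fun i j => ?_,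
    fun i j => ?_, fun i j => ?_⟩
  · simp only [Pi.add_apply, Pi.smul_apply, smul_eq_mul, sum_add_distrib, ← mul_sum, hsum, hsum']
    linear_combination (2 * (n : ℝ) - N) * hab
  · rw [add_mulVec, smul_mulVec, smul_mulVec, hrow, hrow', smul_add, smul_comm a, smul_comm b]
  · simp only [Matrix.add_apply, Matrix.smul_apply, smul_eq_mul, hdiag, hdiag']
    linear_combination hab
  all_goals
    simp only [Matrix.add_apply, Matrix.smul_apply, Pi.add_apply, Pi.smul_apply, smul_eq_mul]
  · nlinarith [mul_nonneg ha (h₁ i j), mul_nonneg hb (h₁' i j)]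
  · nlinarith [mul_nonneg ha (h₂ i j), mul_nonneg hb (h₂' i j)]
  · nlinarith [mul_nonpos_of_nonneg_of_nonpos ha (h₃ i j),
      mul_nonpos_of_nonneg_of_nonpos hb (h₃' i j)]
  · nlinarith [mul_nonpos_of_nonneg_of_nonpos ha (h₄ i j),
      mul_nonpos_of_nonneg_of_nonpos hb (h₄' i j)]

theorem convex : Convex ℝ {p : (Fin N → ℝ) × Matrix (Fin N) (Fin N) ℝ | CLP N n p.1 p.2} :=
  fun _ hp _ hq _ _ ha hb hab => smul_add_smul hp hq ha hb hab

end CLP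

def signVector {ι : Type*} [DecidableEq ι] (s : Finset ι) (i : ι) : ℝ :=
  if i ∈ s then 1 else -1

section signVector

variable {ι : Type*} [DecidableEq ι] {s : Finset ι} {i : ι}

lemma one_add_signVector : 1 + signVector s i = if i ∈ s then 2 else 0 := by
  unfold signVector; split_ifs <;> norm_num

lemma signVector_of_mem (h : i ∈ s) : signVector s i = 1 := if_pos h

lemma signVector_of_notMem (h : i ∉ s) : signVector s i = -1 := if_neg h

lemma sum_signVector [Fintype ι] : ∑ i, signVector s i = 2 * s.card - Fintype.card ι := by
  have h : ∀ i, signVector s i = 2 * (if i ∈ s then 1 else 0) - 1 := by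
    intro i; unfold signVector; split_ifs <;> norm_num
  simp only [h, sum_sub_distrib, ← mul_sum, sum_boole, filter_mem_eq_inter, univ_inter,
    sum_const, card_univ, nsmul_eq_mul, mul_one]

end signVector

noncomputable def signMatrix {ι : Type*} [DecidableEq ι] (s : Finset ι) : Matrix ι ι ℝ :=
  vecMulVec (signVector s) (signVector s)

lemma clp_signVector {N n : ℕ} {s : Finset (Fin N)} (hs : s.card = n) :
    CLP N n (signVector s) (signMatrix s) := by
  refine ⟨transpose_vecMulVec _ _, by simp [sum_signVector, hs], ?_, fun i => ?_, ?_, ?_, ?_, ?_⟩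
  · ext i
    simp [signMatrix, mulVec, dotProduct, vecMulVec_apply, ← mul_sum, sum_signVector, hs, mul_comm]
  all_goals
    intros
    simp only [signMatrix, vecMulVec_apply, signVector]
    split_ifs <;> norm_num

lemma pairWeight_signVector {ι : Type*} [DecidableEq ι] (s : Finset ι) (i j : ι) :
    pairWeight (signVector s) (signMatrix s) i j
      = (1 + signVector s i) * (1 + signVector s j) := by
  simp only [pairWeight, signMatrix, vecMulVec_apply]; ring

def rlpWeight {N : ℕ} (K : ℕ) (x1 : Fin N → ℝ) (M1 : Matrix (Fin N) (Fin N) ℝ)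
    (x : Fin N → ℝ) (M : Matrix (Fin N) (Fin N) ℝ) (i j : Fin N) : ℝ :=
  pairWeight x1 M1 i j + ((K : ℝ) - 1) * pairWeight x M i j

lemma objRLPb_eq_sum_rlpWeight {N : ℕ} (K n : ℕ) (D : Fin N → Fin N → ℝ)
    (x1 : Fin N → ℝ) (M1 : Matrix (Fin N) (Fin N) ℝ)
    (x : Fin N → ℝ) (M : Matrix (Fin N) (Fin N) ℝ) :
    objRLPb K n D x1 M1 x M = 1 / (8 * n) * ∑ i, ∑ j, D i j * rlpWeight K x1 M1 x M i j :=
  rfl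

namespace FeasRLPb

variable {N K n : ℕ} {i0 : Fin N} {x1 x : Fin N → ℝ} {M1 M : Matrix (Fin N) (Fin N) ℝ}

lemma rlpWeight_nonneg (h : FeasRLPb K n i0 x1 M1 x M) (hK : 1 ≤ K) (i j : Fin N) :
    0 ≤ rlpWeight K x1 M1 x M i j := by
  have hK' : (0 : ℝ) ≤ K - 1 := by simp [hK]
  exact add_nonneg (h.1.pairWeight_nonneg i j) (mul_nonneg hK' (h.2.1.pairWeight_nonneg i j))

lemma rlpWeight_le_four (h : FeasRLPb K n i0 x1 M1 x M) (hK : 1 ≤ K) (i j : Fin N) :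
    rlpWeight K x1 M1 x M i j ≤ 4 := by
  have hK' : (0 : ℝ) ≤ K - 1 := by simp [hK]
  have := mul_le_mul_of_nonneg_left (h.2.1.pairWeight_le_right i j) hK'
  have := h.1.pairWeight_le_right i j
  have := h.2.2.1 j
  unfold rlpWeight; linarith

lemma sum_rlpWeight (h : FeasRLPb K n i0 x1 M1 x M) (i : Fin N) :
    ∑ j, rlpWeight K x1 M1 x M i j = 4 * n := by
  simp only [rlpWeight, sum_add_distrib, ← mul_sum, h.1.sum_pairWeight, h.2.1.sum_pairWeight]
  linear_combination 2 * (n : ℝ) * h.2.2.1 i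

/-- `x1 i0 = 1` makes `(K - 1) (1 + x i0)` vanish, which kills the second block in row `i0`. -/
lemma rlpWeight_root (h : FeasRLPb K n i0 x1 M1 x M) (hK : 1 ≤ K) (j : Fin N) :
    rlpWeight K x1 M1 x M i0 j = 2 + 2 * x1 j := by
  obtain ⟨h1, h2, hlink, hroot⟩ := h
  have hK' : (0 : ℝ) ≤ K - 1 := by simp [hK]
  have hW := mul_le_mul_of_nonneg_left (h2.pairWeight_le_left i0 j) hK'
  have hW' := mul_nonneg hK' (h2.pairWeight_nonneg i0 j)
  have := h1.pairWeight_le_right i0 j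
  have := h1.two_mul_add_le_pairWeight i0 j
  have := hlink i0
  unfold rlpWeight
  linarith

end FeasRLPb

namespace BalancedPartition

variable {N K n : ℕ} {J : Fin K → Finset (Fin N)}

lemma eq_of_mem (hJ : BalancedPartition n J) {i : Fin N} {k l : Fin K} (hk : i ∈ J k)
    (hl : i ∈ J l) : k = l := by
  by_contra hne
  exact disjoint_left.mp (hJ.2.1 k l hne) hk hl

lemma sum_signVector (hJ : BalancedPartition n J) (i : Fin N) :
    ∑ k, signVector (J k) i = 2 - K := by
  obtain ⟨k, hk⟩ := hJ.2.2 i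
  rw [← add_sum_erase _ _ (mem_univ k), signVector_of_mem hk,
    sum_congr rfl fun l hl => signVector_of_notMem fun hl' =>
      ne_of_mem_erase hl (hJ.eq_of_mem hl' hk)]
  simp only [sum_neg_distrib, sum_const, card_erase_of_mem (mem_univ k), card_univ,
    Fintype.card_fin, nsmul_eq_mul, mul_one, Nat.cast_pred k.pos]
  ring

lemma sum_pairWeight_signVector (hJ : BalancedPartition n J) {i : Fin N} {k : Fin K}
    (hi : i ∈ J k) (j : Fin N) :
    ∑ l, (1 + signVector (J l) i) * (1 + signVector (J l) j) = 2 * (1 + signVector (J k) j) := by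
  rw [sum_eq_single k, one_add_signVector, if_pos hi]
  · intro l _ hlk
    rw [one_add_signVector, if_neg fun hl => hlk (hJ.eq_of_mem hl hi), zero_mul]
  · simp

end BalancedPartition

lemma pairWeight_sum_smul {ι κ : Type*} {t : Finset κ} {w : κ → ℝ} (hw : ∑ k ∈ t, w k = 1)
    (x : κ → ι → ℝ) (M : κ → Matrix ι ι ℝ) (i j : ι) :
    pairWeight (∑ k ∈ t, w k • x k) (∑ k ∈ t, w k • M k) i j
      = ∑ k ∈ t, w k * pairWeight (x k) (M k) i j := by
  simp only [pairWeight, Finset.sum_apply, Matrix.sum_apply, Pi.smul_apply, Matrix.smul_apply,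
    smul_eq_mul, mul_add, sum_add_distrib, mul_one, hw]

section Planted

variable {N K n : ℕ} (J : Fin K → Finset (Fin N)) (k0 : Fin K)

/-- With first block `signVector (J k0)`, this is the LP image of the true clustering: the second
block averages the rank-one points of the clusters other than `k0`. -/
noncomputable def plantedX : Fin N → ℝ :=
  ∑ k ∈ univ.erase k0, ((K : ℝ) - 1)⁻¹ • signVector (J k)

noncomputable def plantedM : Matrix (Fin N) (Fin N) ℝ :=
  ∑ k ∈ univ.erase k0, ((K : ℝ) - 1)⁻¹ • signMatrix (J k)

variable {J k0}

lemma sum_erase_inv_card_sub_one (hK : 2 ≤ K) :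
    ∑ _k ∈ univ.erase k0, ((K : ℝ) - 1)⁻¹ = 1 := by
  have := (Nat.one_lt_cast (α := ℝ)).mpr hK
  simp [card_erase_of_mem (mem_univ k0), Nat.cast_pred k0.pos, sub_ne_zero_of_ne this.ne']

lemma feasRLPb_planted (hJ : BalancedPartition n J) (hK : 2 ≤ K) {i0 : Fin N}
    (hi0 : i0 ∈ J k0) :
    FeasRLPb K n i0 (signVector (J k0)) (signMatrix (J k0))
      (plantedX J k0) (plantedM J k0) := by
  refine ⟨clp_signVector (hJ.1 k0), ?_, fun i => ?_, signVector_of_mem hi0⟩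
  · have := CLP.convex.sum_mem (t := univ.erase k0)
      (z := fun k => (signVector (J k), signMatrix (J k)))
      (fun _ _ => inv_nonneg.mpr (sub_nonneg.mpr ((Nat.one_lt_cast (α := ℝ)).mpr hK).le))
      (sum_erase_inv_card_sub_one hK) (fun k _ => clp_signVector (hJ.1 k))
    simpa [plantedX, plantedM, Prod.fst_sum, Prod.snd_sum] using this
  · have hK' := sub_ne_zero_of_ne ((Nat.one_lt_cast (α := ℝ)).mpr hK).ne'
    simp only [plantedX, Finset.sum_apply, Pi.smul_apply, smul_eq_mul, mul_sum,
      mul_inv_cancel_left₀ hK']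
    rw [add_sum_erase _ (fun k => signVector (J k) i) (mem_univ k0), hJ.sum_signVector]

lemma rlpWeight_planted (hK : 2 ≤ K) (i j : Fin N) :
    rlpWeight K (signVector (J k0)) (signMatrix (J k0))
      (plantedX J k0) (plantedM J k0) i j
      = ∑ k, (1 + signVector (J k) i) * (1 + signVector (J k) j) := by
  have hK' := sub_ne_zero_of_ne ((Nat.one_lt_cast (α := ℝ)).mpr hK).ne'
  rw [rlpWeight, plantedX, plantedM, pairWeight_sum_smul (sum_erase_inv_card_sub_one hK),
    mul_sum]
  simp only [mul_inv_cancel_left₀ hK', pairWeight_signVector]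
  exact add_sum_erase _ (fun k => (1 + signVector (J k) i) * (1 + signVector (J k) j))
    (mem_univ k0)

lemma rlpWeight_planted_of_mem (hJ : BalancedPartition n J) (hK : 2 ≤ K) {i : Fin N} {k : Fin K}
    (hi : i ∈ J k) (j : Fin N) :
    rlpWeight K (signVector (J k0)) (signMatrix (J k0))
      (plantedX J k0) (plantedM J k0) i j = if j ∈ J k then 4 else 0 := by
  rw [rlpWeight_planted hK, hJ.sum_pairWeight_signVector hi, one_add_signVector]
  split_ifs <;> norm_num

end Planted

lemma eq_of_sum_mul_le_of_threshold {α : Type*} [Fintype α] {D S T : α → ℝ} (c : ℝ)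
    (hsum : ∑ a, S a = ∑ a, T a) (hsign : ∀ a, 0 ≤ (D a - c) * (S a - T a))
    (hc : ∀ a, D a ≠ c) (hle : ∑ a, D a * S a ≤ ∑ a, D a * T a) : S = T := by
  have hgap : ∑ a, (D a - c) * (S a - T a) = ∑ a, D a * S a - ∑ a, D a * T a := by
    simp only [sub_mul, mul_sub, sum_sub_distrib, ← mul_sum, hsum]
    ring
  have hzero := (sum_eq_zero_iff_of_nonneg fun a _ => hsign a).mp
    (le_antisymm (by linarith) (sum_nonneg fun a _ => hsign a))
  funext a
  exact sub_eq_zero.mp ((mul_eq_zero.mp (hzero a (mem_univ a))).resolve_left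
    (sub_ne_zero.mpr (hc a)))

lemma BalancedPartition.exists_threshold {N K n : ℕ} {J : Fin K → Finset (Fin N)}
    (hJ : BalancedPartition n J) {D : Fin N → Fin N → ℝ}
    (hsep : ∀ k : Fin K, ∀ i ∈ J k, ∀ j ∈ J k,
      ∀ k₁ k₂ : Fin K, k₁ ≠ k₂ → ∀ i' ∈ J k₁, ∀ j' ∈ J k₂, D i j < D i' j') :
    ∃ c, (∀ k, ∀ i ∈ J k, ∀ j ∈ J k, D i j < c) ∧ ∀ k, ∀ i ∈ J k, ∀ j ∉ J k, c < D i j := by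
  classical
  let within := univ.filter fun p : Fin N × Fin N => ∃ k, p.1 ∈ J k ∧ p.2 ∈ J k
  let across := univ.filter fun p : Fin N × Fin N => ∃ k l, k ≠ l ∧ p.1 ∈ J k ∧ p.2 ∈ J l
  obtain ⟨c, hlo, hhi⟩ := Order.exists_between_finsets (within.image (Function.uncurry D))
    (across.image (Function.uncurry D)) (by
      simp only [mem_image, mem_filter, mem_univ, true_and, within, across]
      rintro _ ⟨p, ⟨k, hp⟩, rfl⟩ _ ⟨q, ⟨k₁, k₂, hne, hq⟩, rfl⟩
      exact hsep k _ hp.1 _ hp.2 k₁ k₂ hne _ hq.1 _ hq.2)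
  refine ⟨c, fun k i hi j hj => hlo _ (mem_image_of_mem (Function.uncurry D) (a := (i, j)) ?_),
    fun k i hi j hj => hhi _ (mem_image_of_mem (Function.uncurry D) (a := (i, j)) ?_)⟩
  · simp only [mem_filter, mem_univ, true_and, within]
    exact ⟨k, hi, hj⟩
  · obtain ⟨l, hl⟩ := hJ.2.2 j
    simp only [mem_filter, mem_univ, true_and, across]
    exact ⟨k, l, fun h => hj (h ▸ hl), hi, hl⟩

lemma FeasRLPb.rlpWeight_eq_planted_of_le {N K n : ℕ} {J : Fin K → Finset (Fin N)}
    {D : Fin N → Fin N → ℝ} {k0 : Fin K} {i0 : Fin N} {x1 x : Fin N → ℝ}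
    {M1 M : Matrix (Fin N) (Fin N) ℝ} (hfeas : FeasRLPb K n i0 x1 M1 x M)
    (hJ : BalancedPartition n J) (hK : 2 ≤ K) (hn : 0 < n) (hi0 : i0 ∈ J k0) (c : ℝ)
    (hin : ∀ k, ∀ i ∈ J k, ∀ j ∈ J k, D i j < c) (hout : ∀ k, ∀ i ∈ J k, ∀ j ∉ J k, c < D i j)
    (hle : objRLPb K n D x1 M1 x M ≤ objRLPb K n D (signVector (J k0))
      (signMatrix (J k0)) (plantedX J k0) (plantedM J k0)) :
    rlpWeight K x1 M1 x M = rlpWeight K (signVector (J k0))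
      (signMatrix (J k0)) (plantedX J k0) (plantedM J k0) := by
  have hplanted := feasRLPb_planted hJ hK hi0
  set T := rlpWeight K (signVector (J k0)) (signMatrix (J k0)) (plantedX J k0) (plantedM J k0)
    with hT
  have hcases : ∀ i j, (D i j < c ∧ T i j = 4) ∨ (c < D i j ∧ T i j = 0) := by
    intro i j
    obtain ⟨k, hi⟩ := hJ.2.2 i
    rw [hT, rlpWeight_planted_of_mem hJ hK hi]
    by_cases hj : j ∈ J k
    · exact .inl ⟨hin k i hi j hj, if_pos hj⟩
    · exact .inr ⟨hout k i hi j hj, if_neg hj⟩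
  refine Function.uncurry_injective <|
    eq_of_sum_mul_le_of_threshold (D := Function.uncurry D) c ?_ ?_ ?_ ?_
  · simp only [Fintype.sum_prod_type, Function.uncurry_apply_pair, hT, hfeas.sum_rlpWeight,
      hplanted.sum_rlpWeight]
  · rintro ⟨i, j⟩
    simp only [Function.uncurry_apply_pair]
    rcases hcases i j with ⟨hD, hT⟩ | ⟨hD, hT⟩ <;> rw [hT]
    · exact mul_nonneg_of_nonpos_of_nonpos (by linarith)
        (by linarith [hfeas.rlpWeight_le_four (by omega) i j])
    · exact mul_nonneg (by linarith) (by linarith [hfeas.rlpWeight_nonneg (by omega) i j])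
  · rintro ⟨i, j⟩
    rcases hcases i j with ⟨hD, -⟩ | ⟨hD, -⟩
    exacts [hD.ne, hD.ne']
  · rw [objRLPb_eq_sum_rlpWeight, objRLPb_eq_sum_rlpWeight] at hle
    simpa only [Fintype.sum_prod_type, Function.uncurry_apply_pair]
      using le_of_mul_le_mul_left hle (by positivity)

theorem lp_relaxation_recovers_first_cluster_general (N K n : ℕ)
    (hK : 0 < K) (hn : 0 < n)
    (D : Fin N → Fin N → ℝ)
    (J : Fin K → Finset (Fin N)) (hJ : BalancedPartition n J)
    (hsep : ∀ k : Fin K, ∀ i ∈ J k, ∀ j ∈ J k,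
      ∀ k₁ k₂ : Fin K, k₁ ≠ k₂ → ∀ i' ∈ J k₁, ∀ j' ∈ J k₂,
        D i j < D i' j')
    (i0 : Fin N) (hi0 : i0 ∈ J ⟨0, hK⟩)
    (x1 x : Fin N → ℝ) (M1 M : Matrix (Fin N) (Fin N) ℝ)
    (hfeas : FeasRLPb K n i0 x1 M1 x M)
    (hopt : ∀ (x1' x' : Fin N → ℝ) (M1' M' : Matrix (Fin N) (Fin N) ℝ),
      FeasRLPb K n i0 x1' M1' x' M' →
      objRLPb K n D x1 M1 x M ≤ objRLPb K n D x1' M1' x' M') :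
    (∀ i ∈ J ⟨0, hK⟩, x1 i = 1) ∧ (∀ i ∉ J ⟨0, hK⟩, x1 i = -1) := by
  obtain rfl | hK2 : K = 1 ∨ 2 ≤ K := by omega
  · refine ⟨fun i _ => by linear_combination hfeas.2.2.1 i, fun i hi => ?_⟩
    obtain ⟨k, hk⟩ := hJ.2.2 i
    exact (hi (Subsingleton.elim k ⟨0, hK⟩ ▸ hk)).elim
  obtain ⟨c, hin, hout⟩ := hJ.exists_threshold hsep
  have hplanted := feasRLPb_planted hJ hK2 hi0
  have hweight := hfeas.rlpWeight_eq_planted_of_le hJ hK2 hn hi0 c hin hout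
    (hopt _ _ _ _ hplanted)
  have hx1 : ∀ j, x1 j = signVector (J ⟨0, hK⟩) j := by
    intro j
    have := congrFun (congrFun hweight i0) j
    rw [hfeas.rlpWeight_root hK, hplanted.rlpWeight_root hK] at this
    linarith
  exact ⟨fun i hi => (hx1 i).trans (signVector_of_mem hi),
    fun i hi => (hx1 i).trans (signVector_of_notMem hi)⟩

theorem lp_relaxation_recovers_first_cluster (N d K n : ℕ)
    (hK : 0 < K) (hn : 0 < n) (hN : N = K * n)
    (ξ : Fin N → EuclideanSpace ℝ (Fin d))
    (D : Fin N → Fin N → ℝ) (hD : ∀ i j, D i j = ‖ξ i - ξ j‖ ^ 2)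
    (J : Fin K → Finset (Fin N)) (hJ : BalancedPartition n J)
    (hsep : ∀ k : Fin K, ∀ i ∈ J k, ∀ j ∈ J k,
      ∀ k₁ k₂ : Fin K, k₁ ≠ k₂ → ∀ i' ∈ J k₁, ∀ j' ∈ J k₂,
        D i j < D i' j')
    (i0 : Fin N) (hi0 : i0 ∈ J ⟨0, hK⟩)
    (x1 x : Fin N → ℝ) (M1 M : Matrix (Fin N) (Fin N) ℝ)
    (hfeas : FeasRLPb K n i0 x1 M1 x M)
    (hopt : ∀ (x1' x' : Fin N → ℝ) (M1' M' : Matrix (Fin N) (Fin N) ℝ),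
      FeasRLPb K n i0 x1' M1' x' M' →
      objRLPb K n D x1 M1 x M ≤ objRLPb K n D x1' M1' x' M') :
    (∀ i ∈ J ⟨0, hK⟩, x1 i = 1) ∧ (∀ i ∉ J ⟨0, hK⟩, x1 i = -1) :=
  lp_relaxation_recovers_first_cluster_general N K n hK hn D J hJ hsep i0 hi0 x1 x M1 M hfeas hopt
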